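/- (Variational upper bound on the modality-exclusive term.) Let V, T, Z be random variables with finite ranges such that Z is conditionally independent of T given V. Then for every family (q_t) of probability distributions on the range of Z, indexed by the values t of T, the conditional mutual information satisfies I(V; Z | T) ≤ ∑_{(v,t)} P(V=v, T=t) · KL( P_{Z | V=v} ‖ q_t ), where P_{Z | V=v} is the conditional distribution of Z given V=v and the sum ranges over pairs (v,t) with P(V=v, T=t) > 0. -/

import Mathlib

/-!
Given `T = t`, the identity
`∑ᵥ P(v | t) KL(P_{Z | V=v, T=t} ‖ q_t) = I(V; Z | T = t) + KL(P_{Z | T=t} ‖ q_t)`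
and Gibbs' inequality bound `I(V; Z | T = t)` by the average divergence on the left.
Conditional independence `Z ⊥ T | V` turns `P_{Z | V=v, T=t}` into `P_{Z | V=v}`, and averaging
over `t` gives the claim. If one of the divergences is infinite, the right-hand side is `⊤`.
-/

open MeasureTheory ProbabilityTheory

namespace DisNCL

variable {Ω : Type*} [MeasurableSpace Ω]

/-- The probability that a random variable `X` takes the value `x`. -/
noncomputable def pr {S : Type*} (μ : Measure Ω) (X : Ω → S) (x : S) : ℝ :=
  (μ {ω | X ω = x}).toReal

/-- Shannon entropy `H(X)` of a finitely-valued random variable. -/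
noncomputable def H {S : Type*} [Fintype S] (μ : Measure Ω) (X : Ω → S) : ℝ :=
  -∑ x, pr μ X x * Real.log (pr μ X x)

/-- Conditional entropy `H(X | Y) = ∑ y P(Y = y) H(X | Y = y)`, where the inner entropy
is taken under the conditional measure given `Y = y`. -/
noncomputable def condH {S T : Type*} [Fintype S] [Fintype T]
    (μ : Measure Ω) (X : Ω → S) (Y : Ω → T) : ℝ :=
  ∑ y, pr μ Y y * H (ProbabilityTheory.cond μ {ω | Y ω = y}) X

/-- Mutual information `I(X;Y) = H(X) + H(Y) - H(X,Y)`. -/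
noncomputable def MI {S T : Type*} [Fintype S] [Fintype T]
    (μ : Measure Ω) (X : Ω → S) (Y : Ω → T) : ℝ :=
  H μ X + H μ Y - H μ (fun ω => (X ω, Y ω))

/-- Conditional mutual information `I(X;Y|Z) = ∑ z P(Z = z) I(X;Y | Z = z)`, where the
inner mutual information is taken under the conditional measure given `Z = z`. -/
noncomputable def CMI {S T U : Type*} [Fintype S] [Fintype T] [Fintype U]
    (μ : Measure Ω) (X : Ω → S) (Y : Ω → T) (Z : Ω → U) : ℝ :=
  ∑ z, pr μ Z z * MI (ProbabilityTheory.cond μ {ω | Z ω = z}) X Y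

/-- `X` and `Y` are conditionally independent given `Z`
(written `X ⊥ Y | Z`): for all values,
`P(X = x, Y = y, Z = z) ⬝ P(Z = z) = P(X = x, Z = z) ⬝ P(Y = y, Z = z)`. -/
def CondIndep {S T U : Type*} (μ : Measure Ω) (X : Ω → S) (Y : Ω → T) (Z : Ω → U) : Prop :=
  ∀ (x : S) (y : T) (z : U),
    pr μ (fun ω => (X ω, Y ω, Z ω)) (x, y, z) * pr μ Z z =
      pr μ (fun ω => (X ω, Z ω)) (x, z) * pr μ (fun ω => (Y ω, Z ω)) (y, z)

/-- Kullback–Leibler divergence between two distributions on a finite set, with the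
convention that it is `+∞` unless `p` is absolutely continuous with respect to `q`. -/
noncomputable def klDiv {S : Type*} [Fintype S] (p q : S → ℝ) : EReal :=
  if ∀ z, q z = 0 → p z = 0 then ((∑ z, p z * Real.log (p z / q z) : ℝ) : EReal)
  else ⊤

open Finset Real

section Pr

variable {S S' : Type*} {μ : Measure Ω}

lemma pr_eq_measureReal (X : Ω → S) (x : S) : pr μ X x = μ.real (X ⁻¹' {x}) := rfl

lemma pr_nonneg (X : Ω → S) (x : S) : 0 ≤ pr μ X x := ENNReal.toReal_nonneg

lemma pr_congr {X : Ω → S} {Y : Ω → S'} {x : S} {y : S'} (h : ∀ ω, X ω = x ↔ Y ω = y) :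
    pr μ X x = pr μ Y y := by
  simp only [pr, h]

lemma pr_pair_comm (X : Ω → S) (Y : Ω → S') (x : S) (y : S') :
    pr μ (fun ω => (X ω, Y ω)) (x, y) = pr μ (fun ω => (Y ω, X ω)) (y, x) :=
  pr_congr fun ω => by simp [and_comm]

lemma pr_pair_le_left [IsFiniteMeasure μ] (X : Ω → S) (Y : Ω → S') (x : S) (y : S') :
    pr μ (fun ω => (X ω, Y ω)) (x, y) ≤ pr μ X x :=
  measureReal_mono fun _ h => (Prod.mk.inj h).1

lemma pr_pair_le_right [IsFiniteMeasure μ] (X : Ω → S) (Y : Ω → S') (x : S) (y : S') :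
    pr μ (fun ω => (X ω, Y ω)) (x, y) ≤ pr μ Y y :=
  measureReal_mono fun _ h => (Prod.mk.inj h).2

lemma sum_pr [Fintype S] [MeasurableSpace S] [MeasurableSingletonClass S]
    [IsProbabilityMeasure μ] {X : Ω → S} (hX : Measurable X) : ∑ x, pr μ X x = 1 := by
  simp_rw [pr_eq_measureReal]
  rw [sum_measureReal_preimage_singleton _ fun x _ => hX (measurableSet_singleton x)]
  simp

lemma sum_pr_pair_eq_left [Fintype S'] [MeasurableSpace S'] [MeasurableSingletonClass S']
    [IsFiniteMeasure μ] (X : Ω → S) {Y : Ω → S'} (hY : Measurable Y)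
    (x : S) : ∑ y, pr μ (fun ω => (X ω, Y ω)) (x, y) = pr μ X x := by
  have hfiber : ∀ y, pr μ (fun ω => (X ω, Y ω)) (x, y)
      = (μ.restrict {ω | X ω = x}).real (Y ⁻¹' {y}) := fun y => by
    rw [measureReal_restrict_apply (hY (measurableSet_singleton y)), pr, measureReal_def]
    congr 2
    ext ω
    simp [and_comm]
  simp_rw [hfiber]
  rw [sum_measureReal_preimage_singleton _ fun y _ => hY (measurableSet_singleton y)]
  simp [pr, measureReal_def]

lemma sum_pr_pair_eq_right [Fintype S] [MeasurableSpace S] [MeasurableSingletonClass S]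
    [IsFiniteMeasure μ] {X : Ω → S} (hX : Measurable X) (Y : Ω → S')
    (y : S') : ∑ x, pr μ (fun ω => (X ω, Y ω)) (x, y) = pr μ Y y := by
  simp_rw [pr_pair_comm X Y]
  exact sum_pr_pair_eq_left Y hX y

lemma measurableSet_fiber [MeasurableSpace S] [MeasurableSingletonClass S] {X : Ω → S}
    (hX : Measurable X) (x : S) : MeasurableSet {ω | X ω = x} :=
  hX (measurableSet_singleton x)

lemma pr_cond [MeasurableSpace S'] [MeasurableSingletonClass S'] {Y : Ω → S'}
    (hY : Measurable Y) (y : S') (X : Ω → S) (x : S) :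
    pr (cond μ {ω | Y ω = y}) X x = pr μ (fun ω => (Y ω, X ω)) (y, x) / pr μ Y y := by
  simp only [pr]
  rw [cond_apply (measurableSet_fiber hY y), ENNReal.toReal_mul, ENNReal.toReal_inv,
    inv_mul_eq_div]
  congr 3
  ext ω
  simp

end Pr

section RelEntropy

variable {S : Type*} [Fintype S]

noncomputable def relEntropy (p q : S → ℝ) : ℝ := ∑ z, p z * log (p z / q z)

lemma klDiv_of_ac {p q : S → ℝ} (h : ∀ z, q z = 0 → p z = 0) :
    klDiv p q = relEntropy p q :=
  if_pos h

lemma sub_le_mul_log_div {p q : ℝ} (hp : 0 ≤ p) (hq : 0 < q) : p - q ≤ p * log (p / q) :=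
  calc p - q = q * (p / q - 1) := by field_simp
    _ ≤ q * (p / q * log (p / q)) :=
      mul_le_mul_of_nonneg_left (self_sub_one_le_mul_log (div_nonneg hp hq.le)) hq.le
    _ = p * log (p / q) := by field_simp

lemma relEntropy_nonneg {p q : S → ℝ} (hp : ∀ z, 0 ≤ p z) (hq : ∀ z, 0 ≤ q z)
    (hsum : ∑ z, q z ≤ ∑ z, p z) (hac : ∀ z, q z = 0 → p z = 0) :
    0 ≤ relEntropy p q := by
  have hterm : ∀ z, p z - q z ≤ p z * log (p z / q z) := fun z => by
    rcases (hq z).eq_or_lt with h | h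
    · simp [← h, hac z h.symm]
    · exact sub_le_mul_log_div (hp z) h
  calc 0 ≤ ∑ z, (p z - q z) := by rw [sum_sub_distrib]; linarith
    _ ≤ relEntropy p q := sum_le_sum fun z _ => hterm z

lemma klDiv_nonneg {p q : S → ℝ} (hp : ∀ z, 0 ≤ p z) (hq : ∀ z, 0 ≤ q z)
    (hsum : ∑ z, q z ≤ ∑ z, p z) : 0 ≤ klDiv p q := by
  rw [klDiv]
  split_ifs with hac
  · exact EReal.coe_nonneg.2 (relEntropy_nonneg hp hq hsum hac)
  · exact le_top

end RelEntropy

lemma EReal.coe_finset_sum {ι : Type*} (s : Finset ι) (f : ι → ℝ) :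
    ((∑ i ∈ s, f i : ℝ) : EReal) = ∑ i ∈ s, (f i : EReal) :=
  map_sum (⟨⟨Real.toEReal, EReal.coe_zero⟩, EReal.coe_add⟩ : ℝ →+ EReal) f s

lemma entropy_add_entropy_sub_entropy_eq {α β : Type*} [Fintype α] [Fintype β]
    {p : α → β → ℝ} {pa : α → ℝ} {pb : β → ℝ} (hp : ∀ a b, 0 ≤ p a b)
    (ha : ∀ a, ∑ b, p a b = pa a) (hb : ∀ b, ∑ a, p a b = pb b) :
    -∑ a, pa a * log (pa a) + -∑ b, pb b * log (pb b) - -∑ a, ∑ b, p a b * log (p a b)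
      = ∑ a, ∑ b, p a b * log (p a b / (pa a * pb b)) := by
  have hA : ∑ a, pa a * log (pa a) = ∑ a, ∑ b, p a b * log (pa a) := by
    simp_rw [← sum_mul, ha]
  have hB : ∑ b, pb b * log (pb b) = ∑ a, ∑ b, p a b * log (pb b) := by
    rw [sum_comm]
    simp_rw [← sum_mul, hb]
  have hterm : ∀ a b, p a b * log (p a b / (pa a * pb b))
      = p a b * log (p a b) - p a b * log (pa a) - p a b * log (pb b) := fun a b => by
    rcases (hp a b).eq_or_lt with h | h
    · simp [← h]
    have hpa : 0 < pa a := h.trans_le <| ha a ▸ single_le_sum (fun b _ => hp a b) (mem_univ b)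
    have hpb : 0 < pb b := h.trans_le <| hb b ▸ single_le_sum (fun a _ => hp a b) (mem_univ a)
    rw [log_div h.ne' (by positivity), log_mul hpa.ne' hpb.ne']
    ring
  simp only [hA, hB, hterm, sum_sub_distrib]
  ring

section MutualInformation

variable {S S' : Type*} [Fintype S] [MeasurableSpace S] [MeasurableSingletonClass S]
  [Fintype S'] [MeasurableSpace S'] [MeasurableSingletonClass S']
  {μ : Measure Ω} {X : Ω → S} {Y : Ω → S'}

lemma MI_eq_sum [IsFiniteMeasure μ] (hX : Measurable X) (hY : Measurable Y) :
    MI μ X Y = ∑ x, ∑ y, pr μ (fun ω => (X ω, Y ω)) (x, y) *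
      log (pr μ (fun ω => (X ω, Y ω)) (x, y) / (pr μ X x * pr μ Y y)) := by
  rw [MI, H, H, H, Fintype.sum_prod_type]
  exact entropy_add_entropy_sub_entropy_eq (fun x y => pr_nonneg _ _)
    (sum_pr_pair_eq_left X hY) (sum_pr_pair_eq_right hX Y)

omit [Fintype S] [Fintype S'] [MeasurableSpace S'] [MeasurableSingletonClass S'] in
lemma pr_pair_eq_mul_pr_cond [IsFiniteMeasure μ] (hX : Measurable X) (x : S) (y : S') :
    pr μ (fun ω => (X ω, Y ω)) (x, y) = pr μ X x * pr (cond μ {ω | X ω = x}) Y y := by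
  rcases (pr_nonneg X x).eq_or_lt with h | h
  · rw [← h, zero_mul]
    exact le_antisymm (h ▸ pr_pair_le_left X Y x y) (pr_nonneg _ _)
  · rw [pr_cond hX, mul_div_cancel₀ _ h.ne']

theorem sum_pr_mul_relEntropy_cond_eq_MI_add_relEntropy [IsFiniteMeasure μ]
    (hX : Measurable X) (hY : Measurable Y) (q : S' → ℝ)
    (hac : ∀ x y, q y = 0 → pr μ (fun ω => (X ω, Y ω)) (x, y) = 0) :
    ∑ x, pr μ X x * relEntropy (fun y => pr (cond μ {ω | X ω = x}) Y y) q
      = MI μ X Y + relEntropy (fun y => pr μ Y y) q := by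
  set P := fun x y => pr μ (fun ω => (X ω, Y ω)) (x, y) with hP
  have hleft : ∀ x y, pr μ X x * (pr (cond μ {ω | X ω = x}) Y y *
      log (pr (cond μ {ω | X ω = x}) Y y / q y)) = P x y * log (P x y / (pr μ X x * q y)) := by
    intro x y
    rcases eq_or_ne (pr μ X x) 0 with h | h
    · simp [hP, pr_pair_eq_mul_pr_cond hX, h]
    · rw [pr_cond hX, div_div, ← mul_assoc, mul_div_cancel₀ _ h]
  have hright :
      relEntropy (fun y => pr μ Y y) q = ∑ x, ∑ y, P x y * log (pr μ Y y / q y) := by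
    rw [relEntropy, sum_comm]
    simp_rw [← sum_mul, hP, sum_pr_pair_eq_right hX Y]
  have hterm : ∀ x y, P x y * log (P x y / (pr μ X x * q y))
      = P x y * log (P x y / (pr μ X x * pr μ Y y)) + P x y * log (pr μ Y y / q y) := by
    intro x y
    have hP0 : 0 ≤ P x y := pr_nonneg _ _
    rcases hP0.eq_or_lt with h | h
    · simp [← h]
    have hx : 0 < pr μ X x := h.trans_le (pr_pair_le_left X Y x y)
    have hy : 0 < pr μ Y y := h.trans_le (pr_pair_le_right X Y x y)
    have hq : q y ≠ 0 := fun hq => h.ne' (hac x y hq)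
    rw [← mul_add, ← log_mul (by positivity) (by positivity)]
    congr 2
    field_simp
  rw [MI_eq_sum hX hY, hright]
  simp only [relEntropy, mul_sum, hleft, hterm, sum_add_distrib]
  rfl

theorem MI_le_sum_pr_mul_relEntropy [IsProbabilityMeasure μ] (hX : Measurable X)
    (hY : Measurable Y) {q : S' → ℝ} (hq_nonneg : ∀ y, 0 ≤ q y) (hq_sum : ∑ y, q y = 1)
    (hac : ∀ x, pr μ X x ≠ 0 → ∀ y, q y = 0 → pr (cond μ {ω | X ω = x}) Y y = 0) :
    MI μ X Y ≤ ∑ x, pr μ X x * relEntropy (fun y => pr (cond μ {ω | X ω = x}) Y y) q := by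
  have hjoint : ∀ x y, q y = 0 → pr μ (fun ω => (X ω, Y ω)) (x, y) = 0 := by
    intro x y hy
    rw [pr_pair_eq_mul_pr_cond hX]
    by_cases hx : pr μ X x = 0
    · rw [hx, zero_mul]
    · rw [hac x hx y hy, mul_zero]
  have hgibbs : 0 ≤ relEntropy (fun y => pr μ Y y) q :=
    relEntropy_nonneg (pr_nonneg Y) hq_nonneg (by rw [hq_sum, sum_pr hY]) fun y hy => by
      rw [← sum_pr_pair_eq_right hX Y y]
      exact sum_eq_zero fun x _ => hjoint x y hy
  rw [sum_pr_mul_relEntropy_cond_eq_MI_add_relEntropy hX hY q hjoint]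
  linarith

omit [Fintype S] [MeasurableSpace S] [MeasurableSingletonClass S] in
lemma klDiv_pr_cond_nonneg [IsFiniteMeasure μ] (hY : Measurable Y) {x : S} (hx : 0 < pr μ X x)
    {q : S' → ℝ} (hq_nonneg : ∀ y, 0 ≤ q y) (hq_sum : ∑ y, q y = 1) :
    0 ≤ klDiv (fun y => pr (cond μ {ω | X ω = x}) Y y) q := by
  have : IsProbabilityMeasure (cond μ {ω | X ω = x}) :=
    cond_isProbabilityMeasure (ENNReal.toReal_pos_iff.1 hx).1.ne'
  exact klDiv_nonneg (pr_nonneg Y) hq_nonneg (by rw [hq_sum, sum_pr hY])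

end MutualInformation

section ConditionalMutualInformation

variable {SV ST SZ : Type*}
  [MeasurableSpace SV] [MeasurableSingletonClass SV]
  [MeasurableSpace ST] [MeasurableSingletonClass ST]
  {μ : Measure Ω} {V : Ω → SV} {T : Ω → ST} {Z : Ω → SZ}

theorem CondIndep.pr_cond_cond [IsFiniteMeasure μ] (h : CondIndep μ Z T V) (hV : Measurable V)
    (hT : Measurable T) {v : SV} {t : ST} (hvt : 0 < pr μ (fun ω => (V ω, T ω)) (v, t))
    (z : SZ) :
    pr (cond (cond μ {ω | T ω = t}) {ω | V ω = v}) Z z = pr (cond μ {ω | V ω = v}) Z z := by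
  have hinter : {ω | T ω = t} ∩ {ω | V ω = v} = {ω | (T ω, V ω) = (t, v)} := by
    ext ω
    simp
  rw [cond_cond_eq_cond_inter (measurableSet_fiber hT t) (measurableSet_fiber hV v), hinter,
    pr_cond (hT.prodMk hV), pr_cond hV, pr_pair_comm T V]
  have hv : 0 < pr μ V v := hvt.trans_le (pr_pair_le_left V T v t)
  rw [div_eq_div_iff hvt.ne' hv.ne']
  have hci := h z t v
  rw [pr_congr (Y := fun ω => ((T ω, V ω), Z ω)) (y := ((t, v), z)) fun ω => by simp; tauto,
    pr_pair_comm Z V, pr_pair_comm T V] at hci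
  exact hci

variable [Fintype SV] [Fintype ST] [Fintype SZ] [MeasurableSpace SZ] [MeasurableSingletonClass SZ]

theorem CMI_le_sum_pr_mul_relEntropy [IsProbabilityMeasure μ] (hV : Measurable V)
    (hT : Measurable T) (hZ : Measurable Z) (hZT : CondIndep μ Z T V) {q : ST → SZ → ℝ}
    (hq_nonneg : ∀ t z, 0 ≤ q t z) (hq_sum : ∀ t, ∑ z, q t z = 1)
    (hac : ∀ p : SV × ST, 0 < pr μ (fun ω => (V ω, T ω)) p →
      ∀ z, q p.2 z = 0 → pr (cond μ {ω | V ω = p.1}) Z z = 0) :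
    CMI μ V Z T ≤ ∑ p : SV × ST, pr μ (fun ω => (V ω, T ω)) p *
      relEntropy (fun z => pr (cond μ {ω | V ω = p.1}) Z z) (q p.2) := by
  rw [CMI, Fintype.sum_prod_type, sum_comm]
  refine sum_le_sum fun t _ => ?_
  rcases (pr_nonneg T t).eq_or_lt with ht | ht
  · rw [← ht, zero_mul]
    refine (sum_eq_zero fun v _ => ?_).ge
    rw [le_antisymm (ht ▸ pr_pair_le_right V T v t) (pr_nonneg _ _), zero_mul]
  have : IsProbabilityMeasure (cond μ {ω | T ω = t}) :=
    cond_isProbabilityMeasure (ENNReal.toReal_pos_iff.1 ht).1.ne'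
  have hjoint : ∀ v,
      pr μ T t * pr (cond μ {ω | T ω = t}) V v = pr μ (fun ω => (V ω, T ω)) (v, t) := by
    intro v
    rw [pr_cond hT, mul_div_cancel₀ _ ht.ne', pr_pair_comm]
  have hlaw : ∀ v, 0 < pr μ (fun ω => (V ω, T ω)) (v, t) →
      (fun z => pr (cond (cond μ {ω | T ω = t}) {ω | V ω = v}) Z z)
        = fun z => pr (cond μ {ω | V ω = v}) Z z :=
    fun v hvt => funext (hZT.pr_cond_cond hV hT hvt)
  have hac_t : ∀ v, pr (cond μ {ω | T ω = t}) V v ≠ 0 → ∀ z, q t z = 0 →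
      pr (cond (cond μ {ω | T ω = t}) {ω | V ω = v}) Z z = 0 := by
    intro v hv z hz
    have hvt : 0 < pr μ (fun ω => (V ω, T ω)) (v, t) := by
      rw [← hjoint]
      exact mul_pos ht ((pr_nonneg _ _).lt_of_ne' hv)
    rw [congrFun (hlaw v hvt)]
    exact hac (v, t) hvt z hz
  calc pr μ T t * MI (cond μ {ω | T ω = t}) V Z
      ≤ pr μ T t * ∑ v, pr (cond μ {ω | T ω = t}) V v *
          relEntropy (fun z => pr (cond (cond μ {ω | T ω = t}) {ω | V ω = v}) Z z) (q t) :=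
        mul_le_mul_of_nonneg_left
          (MI_le_sum_pr_mul_relEntropy hV hZ (hq_nonneg t) (hq_sum t) hac_t) ht.le
    _ = _ := by
        rw [mul_sum]
        refine sum_congr rfl fun v _ => ?_
        rw [← mul_assoc, hjoint]
        rcases (pr_nonneg _ _ : 0 ≤ pr μ (fun ω => (V ω, T ω)) (v, t)).eq_or_lt with h | h
        · rw [← h, zero_mul, zero_mul]
        · rw [hlaw v h]

end ConditionalMutualInformation

theorem cmi_le_variational_klDiv_general
    {SV ST SZ : Type*}
    [Fintype SV] [MeasurableSpace SV] [MeasurableSingletonClass SV]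
    [Fintype ST] [MeasurableSpace ST] [MeasurableSingletonClass ST]
    [Fintype SZ] [MeasurableSpace SZ] [MeasurableSingletonClass SZ]
    (μ : Measure Ω) [IsProbabilityMeasure μ]
    (V : Ω → SV) (T : Ω → ST) (Z : Ω → SZ)
    (hV : Measurable V) (hT : Measurable T) (hZ : Measurable Z)
    (hZT : CondIndep μ Z T V)
    (q : ST → SZ → ℝ)
    (hq_nonneg : ∀ t z, 0 ≤ q t z) (hq_sum : ∀ t, ∑ z, q t z = 1) :
    (CMI μ V Z T : EReal) ≤
      ∑ p ∈ Finset.univ.filter (fun p : SV × ST => 0 < pr μ (fun ω => (V ω, T ω)) p),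
        ((pr μ (fun ω => (V ω, T ω)) p : EReal) *
          klDiv (fun z => pr (ProbabilityTheory.cond μ {ω | V ω = p.1}) Z z) (q p.2)) := by
  by_cases hac : ∀ p : SV × ST, 0 < pr μ (fun ω => (V ω, T ω)) p →
      ∀ z, q p.2 z = 0 → pr (cond μ {ω | V ω = p.1}) Z z = 0
  · rw [sum_congr rfl fun p hp => by
        rw [klDiv_of_ac (hac p (mem_filter.1 hp).2), ← EReal.coe_mul],
      ← EReal.coe_finset_sum, EReal.coe_le_coe_iff]
    refine (CMI_le_sum_pr_mul_relEntropy hV hT hZ hZT hq_nonneg hq_sum hac).trans_eq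
      (sum_filter_of_ne fun p _ hp => (pr_nonneg _ _).lt_of_ne (left_ne_zero_of_mul hp).symm).symm
  push Not at hac
  obtain ⟨p, hp, z, hqz, hpz⟩ := hac
  refine le_top.trans <| le_of_eq_of_le ?_ <|
    single_le_sum (fun p hp => ?_) (mem_filter.2 ⟨mem_univ p, hp⟩)
  · rw [klDiv, if_neg fun h => hpz (h z hqz), EReal.coe_mul_top_of_pos hp]
  · have hv : 0 < pr μ V p.1 := (mem_filter.1 hp).2.trans_le (pr_pair_le_left V T p.1 p.2)
    exact mul_nonneg (EReal.coe_nonneg.2 (pr_nonneg _ _))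
      (klDiv_pr_cond_nonneg hZ hv (hq_nonneg p.2) (hq_sum p.2))

/-- **Variational upper bound on the modality-exclusive term.**
If `Z ⊥ T | V`, then for every family `(q_t)` of probability distributions on the range
of `Z` indexed by values `t` of `T`,
`I(V; Z | T) ≤ ∑_{(v,t) : P(V=v,T=t) > 0} P(V=v,T=t) · KL(P_{Z|V=v} ‖ q_t)`. -/
theorem cmi_le_variational_klDiv
    {SV ST SZ : Type*}
    [Fintype SV] [Nonempty SV] [MeasurableSpace SV] [MeasurableSingletonClass SV]
    [Fintype ST] [Nonempty ST] [MeasurableSpace ST] [MeasurableSingletonClass ST]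
    [Fintype SZ] [Nonempty SZ] [MeasurableSpace SZ] [MeasurableSingletonClass SZ]
    (μ : Measure Ω) [IsProbabilityMeasure μ]
    (V : Ω → SV) (T : Ω → ST) (Z : Ω → SZ)
    (hV : Measurable V) (hT : Measurable T) (hZ : Measurable Z)
    (hZT : CondIndep μ Z T V)
    (q : ST → SZ → ℝ)
    (hq_nonneg : ∀ t z, 0 ≤ q t z) (hq_sum : ∀ t, ∑ z, q t z = 1) :
    (CMI μ V Z T : EReal) ≤
      ∑ p ∈ Finset.univ.filter (fun p : SV × ST => 0 < pr μ (fun ω => (V ω, T ω)) p),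
        ((pr μ (fun ω => (V ω, T ω)) p : EReal) *
          klDiv (fun z => pr (ProbabilityTheory.cond μ {ω | V ω = p.1}) Z z) (q p.2)) :=
  cmi_le_variational_klDiv_general μ V T Z hV hT hZ hZT q hq_nonneg hq_sum

end DisNCL
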